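/- arXiv:1006.0312 — 2 statements merged into one kernel-verified Lean document; each statement's English description precedes it below -/
import Mathlib

section
/- Let P and Q be probability distributions on a countable product space X×Y×Z such that q(xyz) is close to p(x|y)q(yz) on a large finite set and the YZ-marginals are close in total variation. Precisely: suppose p(xyz) = p(x|y)p(yz) (Markov chain X–Y–Z), S ⊆ X×Y×Z is finite with Σ_{S} p(xyz) ≥ 1 - ε/8, |q(xyz) - p(x|y)q(yz)| ≤ ε/(8|S|) for all (x,y,z) ∈ S, and Σ_{xyz} |p(x|y)q(yz) - p(xyz)| ≤ ε/4. Then the variational distance satisfies Σ_{xyz} |q(xyz) - p(xyz)| ≤ ε. -/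
/-!
On `S` the triangle inequality through `r(xyz) = p(x|y) q(yz)` bounds `∑_S |q - p|` by
`ε/8 + ε/4`. Off `S` one only uses `|q - p| ≤ q + p`: the `p`-mass there is at most `ε/8`,
and the `q`-mass exceeds it by at most `∑_S |q - p|`, so the total is at most
`2 · 3ε/8 + 2 · ε/8 = ε`.
-/

def IsPMF {α : Type*} (p : α → ℝ) : Prop := (∀ a, 0 ≤ p a) ∧ ∑' a, p a = 1

theorem Finset.sum_le_of_forall_le_div_card {ι : Type*} {S : Finset ι} {f : ι → ℝ} {c : ℝ}
    (hc : 0 ≤ c) (h : ∀ i ∈ S, f i ≤ c / S.card) : ∑ i ∈ S, f i ≤ c := by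
  rcases S.eq_empty_or_nonempty with rfl | hS
  · simpa using hc
  · calc ∑ i ∈ S, f i ≤ S.card • (c / S.card) := S.sum_le_card_nsmul f _ h
      _ = c := by
        rw [nsmul_eq_mul, mul_div_cancel₀]
        exact_mod_cast hS.card_pos.ne'

namespace IsPMF

variable {α : Type*} {p q : α → ℝ}

theorem summable (hp : IsPMF p) : Summable p := by
  by_contra h
  simpa [tsum_eq_zero_of_not_summable h] using hp.2

theorem tsum_compl_eq (hp : IsPMF p) (S : Finset α) :
    ∑' a : ↑(↑S : Set α)ᶜ, p a = 1 - ∑ a ∈ S, p a := by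
  rw [← hp.2, ← hp.summable.sum_add_tsum_compl]
  ring

theorem abs_sub_le_add (hp : IsPMF p) (hq : IsPMF q) (a : α) : |q a - p a| ≤ q a + p a :=
  (abs_sub _ _).trans_eq (by rw [abs_of_nonneg (hq.1 a), abs_of_nonneg (hp.1 a)])

theorem summable_abs_sub (hp : IsPMF p) (hq : IsPMF q) : Summable fun a => |q a - p a| :=
  (hq.summable.add hp.summable).of_nonneg_of_le (fun _ => abs_nonneg _) (hp.abs_sub_le_add hq)

theorem tsum_abs_sub_le (hp : IsPMF p) (hq : IsPMF q) (S : Finset α) :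
    ∑' a, |q a - p a| ≤ 2 * ∑ a ∈ S, |q a - p a| + 2 * (1 - ∑ a ∈ S, p a) := by
  have htail : ∑' a : ↑(↑S : Set α)ᶜ, |q a - p a| ≤
      (1 - ∑ a ∈ S, q a) + (1 - ∑ a ∈ S, p a) := by
    rw [← hq.tsum_compl_eq, ← hp.tsum_compl_eq]
    exact (Summable.tsum_le_tsum (fun a : ↑(↑S : Set α)ᶜ => hp.abs_sub_le_add hq a)
      ((hp.summable_abs_sub hq).subtype _) ((hq.summable.add hp.summable).subtype _)).trans_eq
      ((hq.summable.subtype _).tsum_add (hp.summable.subtype _))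
  have hmass : ∑ a ∈ S, p a - ∑ a ∈ S, q a ≤ ∑ a ∈ S, |q a - p a| := by
    rw [← Finset.sum_sub_distrib]
    exact Finset.sum_le_sum fun a _ => by linarith [neg_abs_le (q a - p a)]
  rw [← (hp.summable_abs_sub hq).sum_add_tsum_compl (s := S)]
  linarith

end IsPMF

theorem variational_distance_bound_from_local_closeness_general
    {X Y Z : Type*}
    (p q : X × Y × Z → ℝ) (hp : IsPMF p) (hq : IsPMF q)
    (pXgY : X → Y → ℝ)
    (ε : ℝ) (hε : 0 < ε)
    (S : Finset (X × Y × Z))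
    (hS : 1 - ε / 8 ≤ ∑ s ∈ S, p s)
    (hclose : ∀ s ∈ S,
      |q s - pXgY s.1 s.2.1 * ∑' x', q (x', s.2.1, s.2.2)| ≤ ε / (8 * S.card))
    (hsum2 : Summable fun s : X × Y × Z =>
      |pXgY s.1 s.2.1 * (∑' x', q (x', s.2.1, s.2.2)) - p s|)
    (hyz : ∑' s : X × Y × Z,
      |pXgY s.1 s.2.1 * (∑' x', q (x', s.2.1, s.2.2)) - p s| ≤ ε / 4) :
    ∑' s, |q s - p s| ≤ ε := by
  set r : X × Y × Z → ℝ := fun s => pXgY s.1 s.2.1 * ∑' x', q (x', s.2.1, s.2.2)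
  have hqr : ∑ s ∈ S, |q s - r s| ≤ ε / 8 :=
    Finset.sum_le_of_forall_le_div_card (by positivity) fun s hs =>
      (hclose s hs).trans_eq (div_div _ _ _).symm
  have hrp : ∑ s ∈ S, |r s - p s| ≤ ε / 4 :=
    (hsum2.sum_le_tsum S fun s _ => abs_nonneg _).trans hyz
  have hqp : ∑ s ∈ S, |q s - p s| ≤ 3 * ε / 8 :=
    calc ∑ s ∈ S, |q s - p s| ≤ ∑ s ∈ S, (|q s - r s| + |r s - p s|) :=
          Finset.sum_le_sum fun s _ => abs_sub_le _ _ _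
      _ ≤ 3 * ε / 8 := by rw [Finset.sum_add_distrib]; linarith
  linarith [hp.tsum_abs_sub_le hq S]

theorem variational_distance_bound_from_local_closeness
    {X Y Z : Type*} [Countable X] [Countable Y] [Countable Z]
    (p q : X × Y × Z → ℝ) (hp : IsPMF p) (hq : IsPMF q)
    (pXgY : X → Y → ℝ)
    (hmarkov : ∀ x y z, p (x, y, z) = pXgY x y * ∑' x', p (x', y, z))
    (ε : ℝ) (hε : 0 < ε)
    (S : Finset (X × Y × Z))
    (hS : 1 - ε / 8 ≤ ∑ s ∈ S, p s)
    (hclose : ∀ s ∈ S,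
      |q s - pXgY s.1 s.2.1 * ∑' x', q (x', s.2.1, s.2.2)| ≤ ε / (8 * S.card))
    (hsum2 : Summable fun s : X × Y × Z =>
      |pXgY s.1 s.2.1 * (∑' x', q (x', s.2.1, s.2.2)) - p s|)
    (hyz : ∑' s : X × Y × Z,
      |pXgY s.1 s.2.1 * (∑' x', q (x', s.2.1, s.2.2)) - p s| ≤ ε / 4) :
    ∑' s, |q s - p s| ≤ ε :=
  variational_distance_bound_from_local_closeness_general p q hp hq pXgY ε hε S hS hclose hsum2 hyz
end

section
/- Conditional entropy is lower semicontinuous under total variation convergence: if P_{A_m B_m} are joint distributions on a countable product A×B with V(P_{A_m B_m}, P_{AB}) → 0 as m → ∞, and H(P_{A|B}) < ∞, then liminf_{m→∞} H(P_{A_m|B_m}) ≥ H(P_{A|B}). -/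
/-- Conditional Shannon entropy `H(A|B)` in bits, valued in `ℝ≥0∞`. -/
noncomputable def condHen {A B : Type*} (p : A × B → ℝ) : ENNReal :=
  ∑' ab : A × B, ENNReal.ofReal (-(p ab * Real.logb 2 (p ab / ∑' a, p (a, ab.2))))

/-!
Away from the zeros of `P_{AB}`, each summand `-p(ab) log (p(ab) / p_B(b))` of `H(P_{A|B})` is a
continuous function of the joint probability and of the `B`-marginal, and both converge under
total variation convergence; at the zeros the summand vanishes. So every summand is bounded by the
`liminf` of the corresponding summands of `H(P_{A_m|B_m})`, and Fatou's lemma for the counting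
measure gives the inequality for the sums.
-/

open Filter Topology

lemma IsPMF.summable_s9 {α : Type*} {p : α → ℝ} (hp : IsPMF p) : Summable p := by
  by_contra h
  simpa [tsum_eq_zero_of_not_summable h] using hp.2

lemma ENNReal.tsum_liminf_le_liminf_tsum {α : Type*} [Countable α] (f : ℕ → α → ENNReal) :
    ∑' a, liminf (fun n => f n a) atTop ≤ liminf (fun n => ∑' a, f n a) atTop := by
  let _ : MeasurableSpace α := ⊤
  simpa only [MeasureTheory.lintegral_count] using
    MeasureTheory.lintegral_liminf_le (μ := .count) fun n => measurable_from_top (f := f n)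

lemma tendsto_tsum_comp_of_tendsto_tsum_abs_sub {ι α β : Type*} {l : Filter ι}
    {f : ι → α → ℝ} {g : α → ℝ} (hf : ∀ i, Summable (f i)) (hg : Summable g)
    (hfg : Tendsto (fun i => ∑' a, |f i a - g a|) l (𝓝 0))
    {e : β → α} (he : Function.Injective e) :
    Tendsto (fun i => ∑' b, f i (e b)) l (𝓝 (∑' b, g (e b))) := by
  rw [tendsto_iff_norm_sub_tendsto_zero]
  refine squeeze_zero (fun _ => norm_nonneg _) (fun i => ?_) hfg
  have hsub : Summable fun a => f i a - g a := (hf i).sub hg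
  calc ‖∑' b, f i (e b) - ∑' b, g (e b)‖
      = ‖∑' b, (f i (e b) - g (e b))‖ :=
        congrArg _ (((hf i).comp_injective he).tsum_sub (hg.comp_injective he)).symm
    _ ≤ ∑' b, |f i (e b) - g (e b)| :=
        norm_tsum_le_tsum_norm (hsub.abs.comp_injective he)
    _ ≤ ∑' a, |f i a - g a| :=
        tsum_comp_le_tsum_of_inj hsub.abs (fun _ => abs_nonneg _) he

lemma tendsto_apply_of_tendsto_tsum_abs_sub {ι α : Type*} {l : Filter ι}
    {f : ι → α → ℝ} {g : α → ℝ} (hf : ∀ i, Summable (f i)) (hg : Summable g)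
    (hfg : Tendsto (fun i => ∑' a, |f i a - g a|) l (𝓝 0)) (a : α) :
    Tendsto (fun i => f i a) l (𝓝 (g a)) := by
  simpa using tendsto_tsum_comp_of_tendsto_tsum_abs_sub hf hg hfg
    (Function.injective_of_subsingleton fun _ : Unit => a)

lemma le_tsum_fiber {A B : Type*} {p : A × B → ℝ} (hp : Summable p) (hp0 : ∀ ab, 0 ≤ p ab)
    (ab : A × B) : p ab ≤ ∑' a, p (a, ab.2) :=
  (hp.comp_injective (Prod.mk_left_injective ab.2)).le_tsum ab.1 fun _ _ => hp0 _

lemma ofReal_neg_mul_logb_div_le_liminf {ι : Type*} {l : Filter ι} [l.NeBot] {b x y : ℝ}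
    {u v : ι → ℝ} (hu : Tendsto u l (𝓝 x)) (hv : Tendsto v l (𝓝 y)) (hxy : x ≠ 0 → y ≠ 0) :
    ENNReal.ofReal (-(x * Real.logb b (x / y))) ≤
      liminf (fun i => ENNReal.ofReal (-(u i * Real.logb b (u i / v i)))) l := by
  rcases eq_or_ne x 0 with rfl | hx
  · simp
  refine ((ENNReal.continuous_ofReal.tendsto _).comp ?_).liminf_eq.ge
  exact (hu.mul ((Real.continuousAt_logb (div_ne_zero hx (hxy hx))).tendsto.comp
    (hu.div hv (hxy hx)))).neg

theorem condEntropy_lower_semicontinuous_general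
    {A B : Type*} [Countable A] [Countable B]
    (pm : ℕ → A × B → ℝ) (p : A × B → ℝ)
    (hpm : ∀ m, IsPMF (pm m)) (hp : IsPMF p)
    (hV : Filter.Tendsto (fun m => ∑' ab : A × B, |pm m ab - p ab|)
      Filter.atTop (nhds 0)) :
    condHen p ≤ Filter.liminf (fun m => condHen (pm m)) Filter.atTop := by
  have hpms : ∀ m, Summable (pm m) := fun m => (hpm m).summable_s9
  have hmarg : ∀ b : B, Tendsto (fun m => ∑' a, pm m (a, b)) atTop (𝓝 (∑' a, p (a, b))) :=
    fun b => tendsto_tsum_comp_of_tendsto_tsum_abs_sub hpms hp.summable_s9 hV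
      (Prod.mk_left_injective b)
  have hmarg_ne : ∀ ab, p ab ≠ 0 → ∑' a, p (a, ab.2) ≠ 0 := fun ab h =>
    ((lt_of_le_of_ne (hp.1 ab) h.symm).trans_le (le_tsum_fiber hp.summable_s9 hp.1 ab)).ne'
  calc condHen p
      ≤ ∑' ab, liminf (fun m => ENNReal.ofReal
          (-(pm m ab * Real.logb 2 (pm m ab / ∑' a, pm m (a, ab.2))))) atTop :=
        ENNReal.tsum_le_tsum fun ab => ofReal_neg_mul_logb_div_le_liminf
          (tendsto_apply_of_tendsto_tsum_abs_sub hpms hp.summable_s9 hV ab) (hmarg ab.2)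
          (hmarg_ne ab)
    _ ≤ liminf (fun m => condHen (pm m)) atTop := ENNReal.tsum_liminf_le_liminf_tsum _

theorem condEntropy_lower_semicontinuous
    {A B : Type*} [Countable A] [Countable B]
    (pm : ℕ → A × B → ℝ) (p : A × B → ℝ)
    (hpm : ∀ m, IsPMF (pm m)) (hp : IsPMF p)
    (hfin : condHen p ≠ ⊤)
    (hV : Filter.Tendsto (fun m => ∑' ab : A × B, |pm m ab - p ab|)
      Filter.atTop (nhds 0)) :
    condHen p ≤ Filter.liminf (fun m => condHen (pm m)) Filter.atTop :=
  condEntropy_lower_semicontinuous_general pm p hpm hp hV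
end
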